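/- Zero-temperature catalytic trivialization: let the only free state of each system be a fixed pure state |0⟩⟨0|, and let τ_C = |1⟩⟨1|_C be orthogonal to it. Then for any states ρ_S, σ_S, the channel Λ(ρ_{SC}) = |00⟩⟨00| Tr[(1⊗|0⟩⟨0|)ρ_{SC}] + (σ_S ⊗ τ_C) Tr[(1⊗(1−|0⟩⟨0|))ρ_{SC}], defined on inputs whose C part is supported on {|0⟩,|1⟩}, is completely positive and trace-preserving on such inputs, maps the free state |00⟩⟨00| to itself, and satisfies Λ(ρ_S ⊗ τ_C) = σ_S ⊗ τ_C for every ρ_S. Hence any state transformation ρ_S → σ_S is achieved by a resource non-generating strict robust catalysis. -/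

import Mathlib

open Matrix Kronecker ComplexOrder

noncomputable section

namespace QIT

/-- Partial trace over the first tensor factor. -/
def trFst {A B : Type*} [Fintype A] (M : Matrix (A × B) (A × B) ℂ) : Matrix B B ℂ :=
  Matrix.of fun b b' => ∑ a, M (a, b) (a, b')

/-- Partial trace over the second tensor factor. -/
def trSnd {A B : Type*} [Fintype B] (M : Matrix (A × B) (A × B) ℂ) : Matrix A A ℂ :=
  Matrix.of fun a a' => ∑ b, M (a, b) (a', b)

/-- A density matrix: positive semidefinite with unit trace. -/
def IsDensity {A : Type*} [Fintype A] (M : Matrix A A ℂ) : Prop :=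
  M.PosSemidef ∧ M.trace = 1

/-- The trace norm ‖M‖₁ = Tr √(MᴴM). -/
def traceNorm {A : Type*} [Fintype A] [DecidableEq A] (M : Matrix A A ℂ) : ℝ :=
  (((Matrix.posSemidef_conjTranspose_mul_self M).1.eigenvectorUnitary : Matrix A A ℂ) *
    Matrix.diagonal (fun i => ((Real.sqrt ((Matrix.posSemidef_conjTranspose_mul_self M).1.eigenvalues i) : ℝ) : ℂ)) *
    (star (Matrix.posSemidef_conjTranspose_mul_self M).1.eigenvectorUnitary : Matrix A A ℂ)).trace.re

/-- The extension `id_{Fin k} ⊗ B` of a map on matrices. -/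
def extFun {C D : Type*} (B : Matrix C C ℂ → Matrix D D ℂ) (k : ℕ)
    (M : Matrix (Fin k × C) (Fin k × C) ℂ) : Matrix (Fin k × D) (Fin k × D) ℂ :=
  Matrix.of fun p q => B (Matrix.of fun c c' => M (p.1, c) (q.1, c')) p.2 q.2

/-- Complete positivity: every extension by an identity preserves positive semidefiniteness. -/
def IsCP {C D : Type*} [Fintype C] [Fintype D] (B : Matrix C C ℂ → Matrix D D ℂ) : Prop :=
  ∀ (k : ℕ) (M : Matrix (Fin k × C) (Fin k × C) ℂ), M.PosSemidef → (extFun B k M).PosSemidef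

/-- Trace preservation. -/
def IsTP {C D : Type*} [Fintype C] [Fintype D] (B : Matrix C C ℂ → Matrix D D ℂ) : Prop :=
  ∀ M, (B M).trace = M.trace

/-- A quantum channel: linear, trace-preserving, completely positive. -/
def IsChannel {C D : Type*} [Fintype C] [Fintype D] (B : Matrix C C ℂ → Matrix D D ℂ) : Prop :=
  IsLinearMap ℂ B ∧ IsTP B ∧ IsCP B

/-- Minimal composition of two free-state sets. -/
def minComp {A B : Type*} (FA : Set (Matrix A A ℂ)) (FB : Set (Matrix B B ℂ)) :
    Set (Matrix (A × B) (A × B) ℂ) :=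
  convexHull ℝ {M | ∃ a ∈ FA, ∃ b ∈ FB, M = a ⊗ₖ b}

/-- Maximal composition of two free-state sets: both marginals are free. -/
def maxComp {A B : Type*} [Fintype A] [Fintype B]
    (FA : Set (Matrix A A ℂ)) (FB : Set (Matrix B B ℂ)) :
    Set (Matrix (A × B) (A × B) ℂ) :=
  {M | trSnd M ∈ FA ∧ trFst M ∈ FB}

/-- Separability: convex combination of products of density matrices. -/
def Separable {A B : Type*} [Fintype A] [Fintype B] (M : Matrix (A × B) (A × B) ℂ) : Prop :=
  M ∈ convexHull ℝ {X | ∃ ξ ζ, IsDensity ξ ∧ IsDensity ζ ∧ X = ξ ⊗ₖ ζ}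

/-- Matrix logarithm of a Hermitian matrix via the spectral decomposition. -/
def mlog {A : Type*} [Fintype A] [DecidableEq A] (M : Matrix A A ℂ) : Matrix A A ℂ :=
  if h : M.IsHermitian then
    (Matrix.IsHermitian.eigenvectorUnitary h : Matrix A A ℂ) *
      Matrix.diagonal (fun i => (Real.log (h.eigenvalues i) : ℂ)) *
      (star (Matrix.IsHermitian.eigenvectorUnitary h) : Matrix A A ℂ)
  else 0

/-- Umegaki relative entropy D(ρ‖σ) = Tr[ρ(log ρ − log σ)]. -/
def relEnt {A : Type*} [Fintype A] [DecidableEq A] (ρ σ : Matrix A A ℂ) : ℝ :=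
  ((ρ * (mlog ρ - mlog σ)).trace).re

/-- Reversed relative entropy of resource R̃(ρ) = inf_{γ free} D(γ‖ρ). -/
def revRelEntRes {A : Type*} [Fintype A] [DecidableEq A]
    (F : Set (Matrix A A ℂ)) (ρ : Matrix A A ℂ) : ℝ :=
  sInf {x | ∃ γ ∈ F, x = relEnt γ ρ}

/-- Max-relative entropy of resource. -/
def Dmax {A : Type*} [Fintype A] (ρ : Matrix A A ℂ) (F : Set (Matrix A A ℂ)) : ℝ :=
  sInf {x | ∃ r : ℝ, ∃ ω ∈ F, x = Real.log r ∧ (r • ω - ρ).PosSemidef}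


/-- The extension `Λ ⊗ id_R` of a map on matrices, acting on the first factor. -/
def extFunR {A A' R : Type*} (Λ : Matrix A A ℂ → Matrix A' A' ℂ)
    (M : Matrix (A × R) (A × R) ℂ) : Matrix (A' × R) (A' × R) ℂ :=
  Matrix.of fun p q => Λ (Matrix.of fun a a' => M (a, p.2) (a', q.2)) p.1 q.1


lemma conjTranspose_kron {m n : Type*} (A : Matrix m m ℂ) (B : Matrix n n ℂ) :
    (A ⊗ₖ B)ᴴ = Aᴴ ⊗ₖ Bᴴ := by
  ext ⟨a,b⟩ ⟨c,d⟩
  simp [conjTranspose_apply, kroneckerMap_apply, mul_comm]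

lemma PosSemidef.kron {m n : Type*} [Fintype m] [Fintype n] [DecidableEq m] [DecidableEq n]
    {A : Matrix m m ℂ} {B : Matrix n n ℂ} (hA : A.PosSemidef) (hB : B.PosSemidef) :
    (A ⊗ₖ B).PosSemidef := by
  exact hA.kronecker hB

lemma psd_slice {K S : Type*} [Fintype K] [Fintype S]
    {M : Matrix (K × (S × Fin 2)) (K × (S × Fin 2)) ℂ} (hM : M.PosSemidef) (c : Fin 2) :
    (Matrix.of fun p q : K => ∑ s, M (p, (s, c)) (q, (s, c))).PosSemidef := by
  have : (Matrix.of fun p q : K => ∑ s, M (p, (s, c)) (q, (s, c)))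
      = ∑ s, M.submatrix (fun p : K => (p, (s, c))) (fun q : K => (q, (s, c))) := by
    ext p q
    simp [Finset.sum_apply, Matrix.sum_apply, submatrix_apply]
  rw [this]
  exact Finset.sum_induction _ _ (fun _ _ ha hb => ha.add hb) .zero
    (fun s _ => hM.submatrix _)

lemma trace_kron_mul {S : Type*} [Fintype S] [DecidableEq S]
    (X : Matrix (Fin 2) (Fin 2) ℂ) (N : Matrix (S × Fin 2) (S × Fin 2) ℂ) :
    (((1 : Matrix S S ℂ) ⊗ₖ X) * N).trace
      = ∑ s, (X 0 0 * N (s,0) (s,0) + X 0 1 * N (s,1) (s,0)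
            + X 1 0 * N (s,0) (s,1) + X 1 1 * N (s,1) (s,1)) := by
  simp [Matrix.trace, Matrix.diag, mul_apply, Fintype.sum_prod_type, Fin.sum_univ_two,
    kroneckerMap_apply, one_apply, ite_mul, Finset.mul_sum]
  congr 1 <;> ext s <;> ring


/-- zero-temperature catalytic trivialization: with the sole free state
`|0⟩⟨0|` and the orthogonal catalyst `τ_C = |1⟩⟨1|`, the measure-and-prepare channel
is CPTP, fixes the free state `|00⟩⟨00|`, and maps `ρ_S ⊗ τ_C` to `σ_S ⊗ τ_C` for
every `ρ_S`. -/
theorem zero_temperature_trivialization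
    {S : Type*} [Fintype S] [DecidableEq S]
    (e0 : S → ℂ) (he0 : (∑ i, Complex.normSq (e0 i)) = 1)
    (σ : Matrix S S ℂ) (hσ : IsDensity σ) :
    let P0S : Matrix S S ℂ := Matrix.vecMulVec e0 (star e0)
    let P0C : Matrix (Fin 2) (Fin 2) ℂ :=
      Matrix.of fun i j => if i = 0 ∧ j = 0 then 1 else 0
    let τC : Matrix (Fin 2) (Fin 2) ℂ :=
      Matrix.of fun i j => if i = 1 ∧ j = 1 then 1 else 0
    let Λ : Matrix (S × Fin 2) (S × Fin 2) ℂ → Matrix (S × Fin 2) (S × Fin 2) ℂ :=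
      fun ρ =>
        ((((1 : Matrix S S ℂ) ⊗ₖ P0C) * ρ).trace) • (P0S ⊗ₖ P0C) +
        ((((1 : Matrix S S ℂ) ⊗ₖ (1 - P0C)) * ρ).trace) • (σ ⊗ₖ τC)
    IsChannel Λ ∧
    Λ (P0S ⊗ₖ P0C) = P0S ⊗ₖ P0C ∧
    (∀ ρS : Matrix S S ℂ, IsDensity ρS → Λ (ρS ⊗ₖ τC) = σ ⊗ₖ τC) := by
  intro P0S P0C τC Λ
  -- basic entries
  have hP0C : ∀ i j, P0C i j = if i = 0 ∧ j = 0 then 1 else 0 := fun i j => rfl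
  have hτC : ∀ i j, τC i j = if i = 1 ∧ j = 1 then 1 else 0 := fun i j => rfl
  -- trace functionals
  have htr0 : ∀ N : Matrix (S × Fin 2) (S × Fin 2) ℂ,
      (((1 : Matrix S S ℂ) ⊗ₖ P0C) * N).trace = ∑ s, N (s,0) (s,0) := by
    intro N
    rw [trace_kron_mul]
    simp [hP0C]
  have htr1 : ∀ N : Matrix (S × Fin 2) (S × Fin 2) ℂ,
      (((1 : Matrix S S ℂ) ⊗ₖ (1 - P0C)) * N).trace = ∑ s, N (s,1) (s,1) := by
    intro N
    rw [trace_kron_mul]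
    simp [Matrix.sub_apply, hP0C, one_apply]
  -- traces of the fixed matrices
  have hP0S_tr : P0S.trace = 1 := by
    have : P0S.trace = ∑ i, (Complex.normSq (e0 i) : ℂ) := by
      simp [P0S, Matrix.trace, Matrix.diag, vecMulVec_apply, Pi.star_apply, Complex.mul_conj]
    rw [this, ← Complex.ofReal_sum, he0, Complex.ofReal_one]
  have hP0C_tr : P0C.trace = 1 := by
    simp [Matrix.trace, Matrix.diag, Fin.sum_univ_two, hP0C]
  have hτC_tr : τC.trace = 1 := by
    simp [Matrix.trace, Matrix.diag, Fin.sum_univ_two, hτC]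
  -- PSD of the fixed matrices
  have hP0S_psd : P0S.PosSemidef := by
    have : P0S = (replicateRow Unit (star e0))ᴴ * replicateRow Unit (star e0) := by
      rw [conjTranspose_replicateRow, star_star, ← vecMulVec_eq Unit]
    rw [this]
    exact posSemidef_conjTranspose_mul_self _
  have hP0C_psd : P0C.PosSemidef := by
    have : P0C = Matrix.diagonal ![1, 0] := by
      ext i j
      fin_cases i <;> fin_cases j <;> simp [hP0C, Matrix.diagonal]
    rw [this]
    refine posSemidef_diagonal_iff.2 fun i => ?_
    fin_cases i <;> simp
  have hτC_psd : τC.PosSemidef := by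
    have : τC = Matrix.diagonal ![0, 1] := by
      ext i j
      fin_cases i <;> fin_cases j <;> simp [hτC, Matrix.diagonal]
    rw [this]
    refine posSemidef_diagonal_iff.2 fun i => ?_
    fin_cases i <;> simp
  refine ⟨⟨⟨?_, ?_⟩, ?_, ?_⟩, ?_, ?_⟩
  · -- additivity
    intro x y
    simp only [Λ, mul_add, Matrix.trace_add, add_smul]
    abel
  · -- homogeneity
    intro c x
    simp only [Λ, Matrix.mul_smul, Matrix.trace_smul, smul_eq_mul, smul_smul, smul_add]
  · -- trace preserving
    intro M
    simp only [Λ, Matrix.trace_add, Matrix.trace_smul, trace_kronecker, hP0S_tr, hP0C_tr,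
      hτC_tr, hσ.2, smul_eq_mul, mul_one, htr0, htr1]
    simp [Matrix.trace, Matrix.diag, Fintype.sum_prod_type, Fin.sum_univ_two, ← Finset.sum_add_distrib]
  · -- complete positivity
    intro k M hM
    have hext : extFun Λ k M =
        (Matrix.of fun p q : Fin k => ∑ s, M (p, (s, 0)) (q, (s, 0))) ⊗ₖ (P0S ⊗ₖ P0C) +
        (Matrix.of fun p q : Fin k => ∑ s, M (p, (s, 1)) (q, (s, 1))) ⊗ₖ (σ ⊗ₖ τC) := by
      ext ⟨p1, p2⟩ ⟨q1, q2⟩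
      simp only [extFun, Matrix.of_apply, Λ, Matrix.add_apply, Matrix.smul_apply,
        smul_eq_mul, htr0, htr1, kroneckerMap_apply]
    rw [hext]
    exact (QIT.PosSemidef.kron (psd_slice hM 0) (QIT.PosSemidef.kron hP0S_psd hP0C_psd)).add
      (QIT.PosSemidef.kron (psd_slice hM 1) (QIT.PosSemidef.kron hσ.1 hτC_psd))
  · -- fixes |00><00|
    have h0 : (((1 : Matrix S S ℂ) ⊗ₖ P0C) * (P0S ⊗ₖ P0C)).trace = 1 := by
      rw [htr0]
      simp only [kroneckerMap_apply, hP0C]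
      simpa [Matrix.trace, Matrix.diag] using hP0S_tr
    have h1 : (((1 : Matrix S S ℂ) ⊗ₖ (1 - P0C)) * (P0S ⊗ₖ P0C)).trace = 0 := by
      rw [htr1]
      simp [kroneckerMap_apply, hP0C]
    show (((1 : Matrix S S ℂ) ⊗ₖ P0C) * (P0S ⊗ₖ P0C)).trace • (P0S ⊗ₖ P0C) +
        (((1 : Matrix S S ℂ) ⊗ₖ (1 - P0C)) * (P0S ⊗ₖ P0C)).trace • (σ ⊗ₖ τC) = P0S ⊗ₖ P0C
    rw [h0, h1]
    simp
  · -- maps ρ ⊗ τC to σ ⊗ τC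
    intro ρS hρS
    have h0 : (((1 : Matrix S S ℂ) ⊗ₖ P0C) * (ρS ⊗ₖ τC)).trace = 0 := by
      rw [htr0]
      simp [kroneckerMap_apply, hτC]
    have h1 : (((1 : Matrix S S ℂ) ⊗ₖ (1 - P0C)) * (ρS ⊗ₖ τC)).trace = 1 := by
      rw [htr1]
      simp only [kroneckerMap_apply, hτC]
      simpa [Matrix.trace, Matrix.diag] using hρS.2
    show (((1 : Matrix S S ℂ) ⊗ₖ P0C) * (ρS ⊗ₖ τC)).trace • (P0S ⊗ₖ P0C) +
        (((1 : Matrix S S ℂ) ⊗ₖ (1 - P0C)) * (ρS ⊗ₖ τC)).trace • (σ ⊗ₖ τC) = σ ⊗ₖ τC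
    rw [h0, h1]
    simp


end QIT
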